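/- arXiv:2203.02553 — 2 statements merged into one kernel-verified Lean document; each statement's English description precedes it below -/
import Mathlib

section
/- Let ϑ ≥ 1, d > 0, u ≥ 0 with d ≥ 2u. Suppose honest nodes u' and v receive a dealer's message at times t_u and t_v respectively with t_u ≥ t_v, v's echo reaches u' at some time t ≤ t_v + d, u's hardware clock satisfies H(t) - H(t_u) ≤ ϑ(t - t_u), and u' accepts only because H(t) - H(t_u) ≥ d - 2u. Then t_u - t_v ≤ (1 - 1/ϑ)·d + 2u/ϑ. -/
/-- Lemma 3.6: if two honest nodes both accept a timed crusader broadcast,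
the real times at which they received the dealer's message differ by at most
`(1 - 1/ϑ)d + 2u/ϑ`. -/
theorem stmt_6 (ϑ d u : ℝ) (hϑ : 1 ≤ ϑ) (hd : 0 < d) (hu : 0 ≤ u) (hdu : 2 * u ≤ d)
    (H : ℝ → ℝ) (tu tv t : ℝ)
    (hord : tv ≤ tu) (hecho : t ≤ tv + d)
    (hclock : H t - H tu ≤ ϑ * (t - tu))
    (haccept : d - 2 * u ≤ H t - H tu) :
    tu - tv ≤ (1 - 1 / ϑ) * d + 2 * u / ϑ := by
  have hϑ0 : 0 < ϑ := lt_of_lt_of_le one_pos hϑ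
  have h1 : d - 2 * u ≤ ϑ * (tv + d - tu) :=
    le_trans (le_trans haccept hclock) (by nlinarith)
  have := (div_le_iff₀ hϑ0).mpr (by linarith : d - 2 * u ≤ (tv + d - tu) * ϑ)
  have h2 : (d - 2 * u) / ϑ ≤ tv + d - tu := this
  have : tu - tv ≤ d - (d - 2 * u) / ϑ := by linarith
  calc tu - tv ≤ d - (d - 2 * u) / ϑ := this
    _ = (1 - 1 / ϑ) * d + 2 * u / ϑ := by field_simp; ring
end

section
/- Let ϑ ≥ 1, T, S, δ ≥ 0 be reals. Suppose for each honest node v, the next pulse time satisfies H_v(p'_v) - H_v(p_v) = T + Δ_v with -S ≤ Δ_v ≤ S + δ, and H_v is ϑ-bounded. Then min_v p'_v - min_v p_v ≥ (T - S)/ϑ and min_v p'_v - min_v p_v ≤ T + S + δ. -/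
/-- First item of Lemma 3.10: bounds on the progress of the minimum pulse
time between consecutive rounds. -/
theorem stmt_13 (ϑ T S δ : ℝ) (hϑ : 1 ≤ ϑ) (hT : 0 ≤ T) (hS : 0 ≤ S) (hδ : 0 ≤ δ)
    (m : ℕ) (p p' : Fin (m + 1) → ℝ) (Δ : Fin (m + 1) → ℝ)
    (H : Fin (m + 1) → ℝ → ℝ)
    (hH : ∀ v, ∀ t t' : ℝ, t ≤ t' →
      t' - t ≤ H v t' - H v t ∧ H v t' - H v t ≤ ϑ * (t' - t))
    (hp : ∀ v, p v ≤ p' v)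
    (hstep : ∀ v, H v (p' v) - H v (p v) = T + Δ v)
    (hΔ : ∀ v, -S ≤ Δ v ∧ Δ v ≤ S + δ) :
    (T - S) / ϑ ≤ (⨅ v, p' v) - (⨅ v, p v) ∧
    (⨅ v, p' v) - (⨅ v, p v) ≤ T + S + δ := by
  have hϑ0 : (0 : ℝ) < ϑ := lt_of_lt_of_le one_pos hϑ
  have hlow : ∀ v, (T - S) / ϑ ≤ p' v - p v := by
    intro v
    have h := (hH v (p v) (p' v) (hp v)).2
    have h2 : T - S ≤ H v (p' v) - H v (p v) := by
      have := (hΔ v).1; rw [hstep v]; linarith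
    rw [div_le_iff₀ hϑ0]
    nlinarith
  have hhigh : ∀ v, p' v - p v ≤ T + S + δ := by
    intro v
    have h := (hH v (p v) (p' v) (hp v)).1
    have := (hΔ v).2
    have h3 := hstep v
    linarith
  have bp : BddBelow (Set.range p) := (Set.finite_range p).bddBelow
  have bp' : BddBelow (Set.range p') := (Set.finite_range p').bddBelow
  constructor
  · rw [le_sub_iff_add_le]
    apply le_ciInf
    intro v
    have := ciInf_le bp v
    have := hlow v
    linarith
  · rw [sub_le_iff_le_add]
    obtain ⟨v, hv⟩ := Finite.exists_min p
    have h1 : ⨅ w, p' w ≤ p' v := ciInf_le bp' v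
    have h2 : p v ≤ ⨅ w, p w := le_ciInf hv
    have := hhigh v
    linarith
end
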